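/- arXiv:2206.10010 — 6 statements merged into one kernel-verified Lean document; each statement's English description precedes it below -/
import Mathlib

section
/- For a connected graph G, given φ ∈ ℝ^m with positive entries, the supremum of ||X||_F² over all X ∈ ℝ^{n×d} satisfying X^t 1 = 0 and ||X^t b_k||² ≤ φ_k for all edges k is attained; i.e., the maximal graph realization problem has a maximizer. -/
open Finset Real

/-!
On a connected graph, a function whose values differ by at most `c` across every edge varies by
at most `|V| c` overall, since any two vertices are joined by a path of fewer than `|V|` edges.
The edge constraints bound each coordinate difference `Y i l - Y j l` across an edge `k` by
`√(φ k)`, and a centred vector is bounded by its largest difference, because `|V| x_i` is the sum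
of the differences `x_i - x_j`. Hence the feasible set is bounded; being closed, it is compact, and
the continuous total variance attains its maximum on it.
-/

theorem Fintype.sum_ite_one_neg_one_mul {ι R : Type*} [Fintype ι] [DecidableEq ι] [Ring R]
    {a c : ι} (hac : a ≠ c) (x : ι → R) :
    ∑ i, (if i = a then 1 else if i = c then -1 else 0) * x i = x a - x c := by
  rw [Fintype.sum_eq_add a c hac fun i hi => by simp [hi.1, hi.2]]
  simp [hac.symm, sub_eq_add_neg]

namespace SimpleGraph

variable {V : Type*} {G : SimpleGraph V} {f : V → ℝ} {c : ℝ}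

theorem Walk.abs_sub_le_length_mul (hf : ∀ i j, G.Adj i j → |f i - f j| ≤ c) {i j : V}
    (p : G.Walk i j) : |f i - f j| ≤ p.length * c := by
  induction p with
  | nil => simp
  | cons h q ih =>
    rw [length_cons, Nat.cast_succ, add_mul, one_mul, add_comm]
    exact (abs_sub_le _ _ _).trans (add_le_add (hf _ _ h) ih)

theorem Connected.abs_sub_le_card_mul [Fintype V] (hG : G.Connected) (hc : 0 ≤ c)
    (hf : ∀ i j, G.Adj i j → |f i - f j| ≤ c) (i j : V) : |f i - f j| ≤ Fintype.card V * c := by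
  obtain ⟨p, hp⟩ := (hG.preconnected i j).exists_isPath
  exact (p.abs_sub_le_length_mul hf).trans
    (mul_le_mul_of_nonneg_right (by exact_mod_cast hp.length_lt.le) hc)

end SimpleGraph

theorem abs_le_of_sum_eq_zero_of_abs_sub_le {ι : Type*} [Fintype ι] {x : ι → ℝ} {C : ℝ}
    (hx : ∑ i, x i = 0) (hC : ∀ i j, |x i - x j| ≤ C) (i : ι) : |x i| ≤ C := by
  have hcard : (0 : ℝ) < Fintype.card ι := by exact_mod_cast Fintype.card_pos_iff.mpr ⟨i⟩
  have hsum : Fintype.card ι * x i = ∑ j, (x i - x j) := by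
    simp [sum_sub_distrib, hx, card_univ]
  refine le_of_mul_le_mul_left ?_ hcard
  calc Fintype.card ι * |x i| = |∑ j, (x i - x j)| := by rw [← hsum, abs_mul, Nat.abs_cast]
    _ ≤ ∑ j, |x i - x j| := abs_sum_le_sum_abs _ _
    _ ≤ ∑ _j : ι, C := sum_le_sum fun j _ => hC i j
    _ = Fintype.card ι * C := by simp

section GraphRealization

variable {n m d : ℕ} {E : Fin m → Fin n × Fin n} {b : Fin m → Fin n → ℝ} {φ : Fin m → ℝ}

def realizationFeasibleSet (b : Fin m → Fin n → ℝ) (φ : Fin m → ℝ) :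
    Set (Fin n → Fin d → ℝ) :=
  {Y | (∀ l, ∑ i, Y i l = 0) ∧ ∀ k, ∑ l, (∑ i, b k i * Y i l) ^ 2 ≤ φ k}

variable (hb : ∀ k l, b k l = if l = (E k).1 then 1 else if l = (E k).2 then -1 else 0)
include hb

theorem abs_sub_le_sqrt_of_edge {Y : Fin n → Fin d → ℝ}
    (hY : ∀ k, ∑ l, (∑ i, b k i * Y i l) ^ 2 ≤ φ k) (l : Fin d) {k : Fin m} {i j : Fin n}
    (hk : E k = (i, j)) (hij : i ≠ j) : |Y i l - Y j l| ≤ √(φ k) := by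
  have hdiff : ∑ i', b k i' * Y i' l = Y i l - Y j l := by
    simp_rw [hb, hk]
    exact Fintype.sum_ite_one_neg_one_mul hij _
  apply Real.abs_le_sqrt
  rw [← hdiff]
  exact (single_le_sum (f := fun l => (∑ i, b k i * Y i l) ^ 2)
    (fun _ _ => sq_nonneg _) (mem_univ l)).trans (hY k)

theorem abs_sub_le_of_adj {Y : Fin n → Fin d → ℝ}
    (hY : ∀ k, ∑ l, (∑ i, b k i * Y i l) ^ 2 ≤ φ k) (l : Fin d) {i j : Fin n}
    (hij : (SimpleGraph.fromRel fun i j => ∃ k, E k = (i, j)).Adj i j) :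
    |Y i l - Y j l| ≤ ∑ k, √(φ k) := by
  have hsqrt_le (k) : √(φ k) ≤ ∑ k, √(φ k) :=
    single_le_sum (fun _ _ => sqrt_nonneg _) (mem_univ k)
  obtain ⟨hne, ⟨k, hk⟩ | ⟨k, hk⟩⟩ := hij
  · exact (abs_sub_le_sqrt_of_edge hb hY l hk hne).trans (hsqrt_le k)
  · rw [abs_sub_comm]
    exact (abs_sub_le_sqrt_of_edge hb hY l hk hne.symm).trans (hsqrt_le k)

theorem abs_le_of_mem_realizationFeasibleSet
    (hconn : (SimpleGraph.fromRel fun i j => ∃ k, E k = (i, j)).Connected)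
    {Y : Fin n → Fin d → ℝ} (hY : Y ∈ realizationFeasibleSet b φ) (i : Fin n) (l : Fin d) :
    |Y i l| ≤ n * ∑ k, √(φ k) := by
  refine abs_le_of_sum_eq_zero_of_abs_sub_le (hY.1 l) (fun i j => ?_) i
  simpa using hconn.abs_sub_le_card_mul (f := fun i => Y i l)
    (sum_nonneg fun _ _ => sqrt_nonneg _) (fun _ _ h => abs_sub_le_of_adj hb hY.2 l h) i j

theorem isCompact_realizationFeasibleSet
    (hconn : (SimpleGraph.fromRel fun i j => ∃ k, E k = (i, j)).Connected) :
    IsCompact (realizationFeasibleSet (d := d) b φ) := by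
  have hclosed : IsClosed (realizationFeasibleSet (d := d) b φ) := by
    simp only [realizationFeasibleSet, Set.ofPred_and, Set.ofPred_forall]
    exact (isClosed_iInter fun l => isClosed_eq (by fun_prop) continuous_const).inter
        (isClosed_iInter fun k => isClosed_le (by fun_prop) continuous_const)
  have hbox := isCompact_univ_pi fun (_ : Fin n) => isCompact_univ_pi fun (_ : Fin d) =>
    isCompact_Icc (a := -(n * ∑ k, √(φ k))) (b := n * ∑ k, √(φ k))
  exact hbox.of_isClosed_subset hclosed fun Y hY i _ l _ =>
    abs_le.mp (abs_le_of_mem_realizationFeasibleSet hb hconn hY i l)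

end GraphRealization

theorem stmt_3_general (n m d : ℕ)
    (E : Fin m → Fin n × Fin n)
    (hconn : (SimpleGraph.fromRel (fun i j => ∃ k, E k = (i, j))).Connected)
    (b : Fin m → Fin n → ℝ)
    (hb : ∀ k l, b k l = if l = (E k).1 then 1 else if l = (E k).2 then -1 else 0)
    (φ : Fin m → ℝ) (hφ : ∀ k, 0 < φ k) :
    ∃ X : Fin n → Fin d → ℝ,
      (∀ l, ∑ i, X i l = 0) ∧ (∀ k, ∑ l, (∑ i, b k i * X i l) ^ 2 ≤ φ k) ∧
      ∀ Y : Fin n → Fin d → ℝ,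
        (∀ l, ∑ i, Y i l = 0) → (∀ k, ∑ l, (∑ i, b k i * Y i l) ^ 2 ≤ φ k) →
        ∑ i, ∑ l, Y i l ^ 2 ≤ ∑ i, ∑ l, X i l ^ 2 := by
  have hzero : (0 : Fin n → Fin d → ℝ) ∈ realizationFeasibleSet b φ :=
    ⟨fun _ => by simp, fun k => by simpa using (hφ k).le⟩
  have hvar : Continuous fun Y : Fin n → Fin d → ℝ => ∑ i, ∑ l, Y i l ^ 2 := by fun_prop
  obtain ⟨X, ⟨hX₀, hX⟩, hmax⟩ :=
    (isCompact_realizationFeasibleSet hb hconn).exists_isMaxOn ⟨0, hzero⟩ hvar.continuousOn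
  exact ⟨X, hX₀, hX, fun Y hY₀ hY => hmax ⟨hY₀, hY⟩⟩

/-- The relaxed maximal graph realization problem attains its supremum. -/
theorem stmt_3 (n m d : ℕ)
    (E : Fin m → Fin n × Fin n) (hE : ∀ k, (E k).1 ≠ (E k).2)
    (hconn : (SimpleGraph.fromRel (fun i j => ∃ k, E k = (i, j))).Connected)
    (b : Fin m → Fin n → ℝ)
    (hb : ∀ k l, b k l = if l = (E k).1 then 1 else if l = (E k).2 then -1 else 0)
    (φ : Fin m → ℝ) (hφ : ∀ k, 0 < φ k) :
    ∃ X : Fin n → Fin d → ℝ,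
      (∀ l, ∑ i, X i l = 0) ∧ (∀ k, ∑ l, (∑ i, b k i * X i l) ^ 2 ≤ φ k) ∧
      ∀ Y : Fin n → Fin d → ℝ,
        (∀ l, ∑ i, Y i l = 0) → (∀ k, ∑ l, (∑ i, b k i * Y i l) ^ 2 ≤ φ k) →
        ∑ i, ∑ l, Y i l ^ 2 ≤ ∑ i, ∑ l, X i l ^ 2 :=
  stmt_3_general n m d E hconn b hb φ hφ
end

section
/- The constraint set of the relaxed maximal realization problem, {X ∈ ℝ^{n×d} : X^t 1 = 0 and ||X^t b_k||² ≤ φ_k for all k ∈ [m]}, is a compact subset of ℝ^{n×d} when G is connected. -/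
/-!
Let `X` be feasible and fix a column `l`. For an edge `k = (u, v)` the constraint gives
`|X u l - X v l| ≤ √φ_k`, so along a shortest path the column varies by at most
`diam G · ∑ₖ √φₖ` between any two vertices. A vector with zero sum and oscillation at most `R`
has all entries bounded by `R`, so the feasible set is bounded; it is closed as the solution set
of continuous equations and inequalities.
-/

open Finset Real

namespace SimpleGraph

variable {V α : Type*} [SeminormedAddGroup α] {G : SimpleGraph V} {f : V → α} {B : ℝ}

theorem Walk.norm_sub_le_length_mul (hadj : ∀ a c, G.Adj a c → ‖f a - f c‖ ≤ B) :
    ∀ {i j : V} (w : G.Walk i j), ‖f i - f j‖ ≤ w.length * B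
  | _, _, .nil => by simp
  | i, j, .cons (v := c) h p =>
    calc ‖f i - f j‖ ≤ ‖f i - f c‖ + ‖f c - f j‖ :=
        norm_sub_le_norm_sub_add_norm_sub _ _ _
      _ ≤ B + p.length * B := add_le_add (hadj i c h) (norm_sub_le_length_mul hadj p)
      _ = (p.cons h).length * B := by rw [Walk.length_cons]; push_cast; ring

theorem Connected.norm_sub_le_diam_mul [Finite V] (hG : G.Connected) (hB : 0 ≤ B)
    (hadj : ∀ a c, G.Adj a c → ‖f a - f c‖ ≤ B) (i j : V) :
    ‖f i - f j‖ ≤ G.diam * B := by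
  have := hG.nonempty
  obtain ⟨w, hw⟩ := hG.exists_walk_length_eq_dist i j
  have hdiam : G.dist i j ≤ G.diam := dist_le_diam (connected_iff_ediam_ne_top.mp hG)
  calc ‖f i - f j‖ ≤ w.length * B := w.norm_sub_le_length_mul hadj
    _ ≤ G.diam * B := by rw [hw]; gcongr

end SimpleGraph

theorem abs_le_of_sum_eq_zero_of_abs_sub_le_s4 {ι : Type*} [Fintype ι] {f : ι → ℝ} {R : ℝ}
    (hf : ∑ i, f i = 0) (hR : ∀ i j, |f i - f j| ≤ R) (i : ι) : |f i| ≤ R := by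
  have hcard : (0 : ℝ) < Fintype.card ι := by exact_mod_cast Fintype.card_pos_iff.mpr ⟨i⟩
  have hmul : Fintype.card ι * f i = ∑ j, (f i - f j) := by simp [sum_sub_distrib, hf]
  refine le_of_mul_le_mul_left ?_ hcard
  calc Fintype.card ι * |f i| = |∑ j, (f i - f j)| := by rw [← hmul, abs_mul, abs_of_pos hcard]
    _ ≤ ∑ j, |f i - f j| := abs_sum_le_sum_abs _ _
    _ ≤ ∑ _j : ι, R := sum_le_sum fun j _ => hR i j
    _ = Fintype.card ι * R := by simp

theorem sum_incidence_mul {V : Type*} [Fintype V] [DecidableEq V] {u v : V} (huv : u ≠ v)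
    {b : V → ℝ} (hb : ∀ l, b l = if l = u then 1 else if l = v then -1 else 0) (x : V → ℝ) :
    ∑ i, b i * x i = x u - x v := by
  simp [hb, ite_mul, sum_ite, filter_eq', filter_ne', huv.symm, sub_eq_add_neg]

theorem abs_le_sqrt_of_sum_sq_le {ι : Type*} [Fintype ι] {y : ι → ℝ} {c : ℝ}
    (h : ∑ l, y l ^ 2 ≤ c) (l : ι) : |y l| ≤ √c :=
  abs_le_sqrt ((single_le_sum (fun l _ => sq_nonneg (y l)) (mem_univ l)).trans h)

theorem stmt_4_general (n m d : ℕ)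
    (E : Fin m → Fin n × Fin n)
    (hconn : (SimpleGraph.fromRel (fun i j => ∃ k, E k = (i, j))).Connected)
    (b : Fin m → Fin n → ℝ)
    (hb : ∀ k l, b k l = if l = (E k).1 then 1 else if l = (E k).2 then -1 else 0)
    (φ : Fin m → ℝ) :
    IsCompact {X : Fin n → Fin d → ℝ |
      (∀ l, ∑ i, X i l = 0) ∧ ∀ k, ∑ l, (∑ i, b k i * X i l) ^ 2 ≤ φ k} := by
  set G := SimpleGraph.fromRel (fun i j : Fin n => ∃ k, E k = (i, j))
  set B := ∑ k, √(φ k)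
  have hB : 0 ≤ B := sum_nonneg fun k _ => sqrt_nonneg _
  have hclosed : IsClosed {X : Fin n → Fin d → ℝ |
      (∀ l, ∑ i, X i l = 0) ∧ ∀ k, ∑ l, (∑ i, b k i * X i l) ^ 2 ≤ φ k} := by
    simp only [Set.ofPred_and, Set.ofPred_forall]
    exact (isClosed_iInter fun l => isClosed_eq (by fun_prop) continuous_const).inter
      (isClosed_iInter fun k => isClosed_le (by fun_prop) continuous_const)
  refine (isCompact_Icc (a := fun _ _ => -(G.diam * B)) (b := fun _ _ => G.diam * B))
    |>.of_isClosed_subset hclosed ?_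
  rintro X ⟨hsum, hφX⟩
  have hedge : ∀ l k {u v}, E k = (u, v) → u ≠ v → ‖X u l - X v l‖ ≤ B := by
    intro l k u v hk huv
    have hbk : ∀ i, b k i = if i = u then 1 else if i = v then -1 else 0 := by
      simpa [hk] using hb k
    rw [Real.norm_eq_abs, ← sum_incidence_mul huv hbk fun i => X i l]
    exact (abs_le_sqrt_of_sum_sq_le (hφX k) l).trans
      (single_le_sum (fun k _ => sqrt_nonneg _) (mem_univ k))
  have hadj : ∀ l a c, G.Adj a c → ‖X a l - X c l‖ ≤ B := by
    rintro l a c ⟨hac, ⟨k, hk⟩ | ⟨k, hk⟩⟩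
    · exact hedge l k hk hac
    · rw [norm_sub_rev]; exact hedge l k hk hac.symm
  have hcoord : ∀ i l, |X i l| ≤ G.diam * B := fun i l =>
    abs_le_of_sum_eq_zero_of_abs_sub_le_s4 (hsum l)
      (fun i j => Real.norm_eq_abs _ ▸ hconn.norm_sub_le_diam_mul hB (hadj l) i j) i
  exact ⟨fun i l => neg_le_of_abs_le (hcoord i l), fun i l => le_of_abs_le (hcoord i l)⟩

/-- The constraint set of the relaxed maximal realization problem is compact
when the graph is connected. -/
theorem stmt_4 (n m d : ℕ)
    (E : Fin m → Fin n × Fin n) (hE : ∀ k, (E k).1 ≠ (E k).2)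
    (hconn : (SimpleGraph.fromRel (fun i j => ∃ k, E k = (i, j))).Connected)
    (b : Fin m → Fin n → ℝ)
    (hb : ∀ k l, b k l = if l = (E k).1 then 1 else if l = (E k).2 then -1 else 0)
    (φ : Fin m → ℝ) (hφ : ∀ k, 0 < φ k) :
    IsCompact {X : Fin n → Fin d → ℝ |
      (∀ l, ∑ i, X i l = 0) ∧ ∀ k, ∑ l, (∑ i, b k i * X i l) ^ 2 ≤ φ k} :=
  stmt_4_general n m d E hconn b hb φ
end

section
/- The centered regular n-gon is a maximal graph realization of the n-cycle: among all maps x : {0,...,n−1} → ℝ² with Σ_j x(j) = 0 and ||x(j+1 mod n) − x(j)||² ≤ 1 for all j, the total variance Σ_j ||x(j)||² is at most (n/4)·csc²(π/n), with equality for the centered regular n-gon with unit edge length. -/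
/-!
Identify the plane with `ℂ` and expand a centered realization `y` of the cycle in the characters
`ψ` of `Fin n`. The edge differences `y (j + 1) - y j` have Fourier coefficients
`(conj (ψ 1) - 1) · ŷ ψ`, the coefficient at the trivial character vanishes because `y` is
centered, and every other `ψ 1` is an `n`-th root of unity `≠ 1`, hence at distance at least
`2 sin (π / n)` from `1`. By Parseval, `4 sin² (π / n) · ∑ ‖y j‖² ≤ ∑ ‖y (j + 1) - y j‖² ≤ n`.
Equality holds for the regular `n`-gon with unit edges: it is a single Fourier mode, at a
character with `ψ 1 = exp (-2πi / n)`, and its circumradius is `(2 sin (π / n))⁻¹`.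
-/

open Finset Real

lemma Real.sin_le_sin_of_le_of_le_pi_sub {a x : ℝ} (ha : -(π / 2) ≤ a) (hax : a ≤ x)
    (hxa : x ≤ π - a) : sin a ≤ sin x := by
  rcases le_total x (π / 2) with hx | hx
  · exact sin_le_sin_of_le_of_le_pi_div_two ha hx hax
  · rw [← sin_pi_sub x]
    exact sin_le_sin_of_le_of_le_pi_div_two ha (by linarith) (by linarith)

lemma Real.sin_pi_div_pos {n : ℕ} (hn : 2 ≤ n) : 0 < sin (π / n) := by
  have : (2 : ℝ) ≤ n := by exact_mod_cast hn
  exact sin_pos_of_pos_of_lt_pi (by positivity) (div_lt_self pi_pos (by linarith))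

namespace Complex

lemma exp_two_pi_I_div_pow (n k : ℕ) :
    exp (2 * π * I / n) ^ k = exp (↑(2 * π * k / n) * I) := by
  rw [← exp_nat_mul]; push_cast; ring_nf

lemma norm_exp_two_pi_I_div_pow_sub_one (n k : ℕ) :
    ‖exp (2 * π * I / n) ^ k - 1‖ = 2 * |Real.sin (π * k / n)| := by
  rw [exp_two_pi_I_div_pow, mul_comm, norm_exp_I_mul_ofReal_sub_one, norm_mul, Real.norm_ofNat,
    Real.norm_eq_abs]
  ring_nf

lemma two_mul_sin_pi_div_le_norm_sub_one {ζ : ℂ} {n : ℕ} (hζ : ζ ^ n = 1) (hζ1 : ζ ≠ 1) :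
    2 * Real.sin (π / n) ≤ ‖ζ - 1‖ := by
  rcases eq_or_ne n 0 with rfl | hn
  · simp
  have : NeZero n := ⟨hn⟩
  obtain ⟨k, hkn, rfl⟩ := (isPrimitiveRoot_exp n hn).eq_pow_of_pow_eq_one hζ
  have hk : (1 : ℝ) ≤ k := by
    exact_mod_cast Nat.one_le_iff_ne_zero.mpr fun hk => hζ1 (by rw [hk, pow_zero])
  have hkn : (k : ℝ) + 1 ≤ n := by exact_mod_cast hkn
  have hnpos : (0 : ℝ) < n := by positivity
  rw [norm_exp_two_pi_I_div_pow_sub_one]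
  gcongr
  refine (sin_le_sin_of_le_of_le_pi_sub ?_ ?_ ?_).trans (le_abs_self _)
  · linarith [pi_pos, show 0 ≤ π / n by positivity]
  · rw [mul_div_right_comm]
    exact le_mul_of_one_le_right (by positivity) hk
  · rw [div_le_iff₀ hnpos, sub_mul, div_mul_cancel₀ _ hnpos.ne']
    nlinarith [pi_pos]

end Complex

namespace AddChar

variable {G : Type*} [AddCommGroup G] [Fintype G]

lemma sum_norm_sq_sum_mul (y : G → ℂ) :
    ∑ ψ : AddChar G ℂ, ‖∑ j, ψ j * y j‖ ^ 2 = Fintype.card G * ∑ j, ‖y j‖ ^ 2 := by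
  classical
  apply Complex.ofReal_injective
  have hchar (ψ : AddChar G ℂ) (j l : G) :
      ψ j * y j * (starRingEnd ℂ) (ψ l * y l) = ψ (j - l) * (y j * (starRingEnd ℂ) (y l)) := by
    rw [map_mul, ← map_neg_eq_conj, sub_eq_add_neg, map_add_eq_mul]; ring
  push_cast
  simp_rw [← Complex.mul_conj', map_sum, sum_mul_sum, hchar]
  rw [sum_comm, mul_sum]
  refine sum_congr rfl fun j _ => ?_
  rw [sum_comm]
  simp_rw [← sum_mul, sum_apply_eq_ite, sub_eq_zero]
  simp

lemma sum_mul_comp_add_right (ψ : AddChar G ℂ) (y : G → ℂ) (g : G) :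
    ∑ j, ψ j * y (j + g) = (starRingEnd ℂ) (ψ g) * ∑ j, ψ j * y j := by
  rw [← map_neg_eq_conj, mul_sum]
  refine Fintype.sum_equiv (Equiv.addRight g) _ _ fun j => ?_
  simp [← mul_assoc, ← map_add_eq_mul]

lemma mul_sum_norm_sq_le_sum_norm_sq_sub {y : G → ℂ} (hy : ∑ j, y j = 0) {g : G} {c : ℝ}
    (hc0 : 0 ≤ c) (hc : ∀ ψ : AddChar G ℂ, ψ ≠ 0 → c ≤ ‖ψ g - 1‖) :
    c ^ 2 * ∑ j, ‖y j‖ ^ 2 ≤ ∑ j, ‖y (j + g) - y j‖ ^ 2 := by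
  have hcard : (0 : ℝ) < Fintype.card G := by exact_mod_cast Fintype.card_pos
  have hterm (ψ : AddChar G ℂ) :
      c ^ 2 * ‖∑ j, ψ j * y j‖ ^ 2 ≤ ‖∑ j, ψ j * (y (j + g) - y j)‖ ^ 2 := by
    simp_rw [mul_sub]
    rw [sum_sub_distrib, sum_mul_comp_add_right, ← sub_one_mul, norm_mul, mul_pow,
      ← Complex.norm_conj (_ - 1), map_sub, map_one, Complex.conj_conj]
    rcases eq_or_ne ψ 0 with rfl | hψ
    · simp [hy]
    gcongr
    exact hc ψ hψ
  rw [← mul_le_mul_iff_of_pos_left hcard, mul_left_comm, ← sum_norm_sq_sum_mul,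
    ← sum_norm_sq_sum_mul, mul_sum]
  exact sum_le_sum fun ψ _ => hterm ψ

end AddChar

namespace Fin

open Fin.CommRing

variable {n : ℕ} [NeZero n]

lemma addChar_apply_one_pow (ψ : AddChar (Fin n) ℂ) : ψ 1 ^ n = 1 := by
  rw [← ψ.map_nsmul_eq_pow, nsmul_one, natCast_self, ψ.map_zero_eq_one]

lemma addChar_apply_one_ne_one {ψ : AddChar (Fin n) ℂ} (hψ : ψ ≠ 0) : ψ 1 ≠ 1 := by
  refine fun h1 => hψ ?_
  ext k
  rw [AddChar.zero_apply, ← cast_val_eq_self k, ← nsmul_one, ψ.map_nsmul_eq_pow, h1, one_pow]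

lemma sq_two_mul_sin_mul_sum_norm_sq_le {y : Fin n → ℂ} (hy : ∑ j, y j = 0) :
    (2 * sin (π / n)) ^ 2 * ∑ j, ‖y j‖ ^ 2 ≤ ∑ j, ‖y (j + 1) - y j‖ ^ 2 := by
  have hsin : 0 ≤ sin (π / n) := sin_nonneg_of_nonneg_of_le_pi (by positivity)
    (div_le_self pi_pos.le (by exact_mod_cast NeZero.one_le))
  exact AddChar.mul_sum_norm_sq_le_sum_norm_sq_sub hy (by positivity) fun ψ hψ =>
    Complex.two_mul_sin_pi_div_le_norm_sub_one (addChar_apply_one_pow ψ)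
      (addChar_apply_one_ne_one hψ)

end Fin

lemma EuclideanSpace.sq_two_mul_sin_mul_sum_norm_sq_le {n : ℕ} [NeZero n]
    {x : Fin n → EuclideanSpace ℝ (Fin 2)} (hx : ∑ j, x j = 0) :
    (2 * sin (π / n)) ^ 2 * ∑ j, ‖x j‖ ^ 2 ≤ ∑ j, ‖x (j + 1) - x j‖ ^ 2 := by
  let e := Complex.orthonormalBasisOneI.repr.symm
  simpa [← map_sub, e.norm_map] using
    Fin.sq_two_mul_sin_mul_sum_norm_sq_le (y := fun j => e (x j)) (by rw [← map_sum, hx, map_zero])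

noncomputable def regularPolygon (n : ℕ) (j : Fin n) : ℂ :=
  (2 * Real.sin (π / n))⁻¹ * Complex.exp (2 * π * Complex.I / n) ^ (j : ℕ)

namespace regularPolygon

variable {n : ℕ}

lemma norm_apply (hn : 2 ≤ n) (j : Fin n) : ‖regularPolygon n j‖ = (2 * sin (π / n))⁻¹ := by
  have hζ := Complex.isPrimitiveRoot_exp n (by omega)
  rw [regularPolygon, norm_mul, norm_pow, hζ.norm'_eq_one (by omega), one_pow, mul_one]
  norm_cast
  rw [Real.norm_of_nonneg (by have := Real.sin_pi_div_pos hn; positivity)]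

lemma sum_eq_zero (hn : 2 ≤ n) : ∑ j, regularPolygon n j = 0 := by
  have hζ := Complex.isPrimitiveRoot_exp n (by omega)
  simp only [regularPolygon]
  rw [← mul_sum, Fin.sum_univ_eq_sum_range (fun j => Complex.exp (2 * π * Complex.I / n) ^ j),
    hζ.geom_sum_eq_zero (by omega), mul_zero]

lemma norm_apply_add_one_sub [NeZero n] (hn : 2 ≤ n) (j : Fin n) :
    ‖regularPolygon n (j + 1) - regularPolygon n j‖ = 1 := by
  have hζ := Complex.isPrimitiveRoot_exp n (by omega)
  have hsucc : Complex.exp (2 * π * Complex.I / n) ^ ((j + 1 : Fin n) : ℕ) =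
      Complex.exp (2 * π * Complex.I / n) ^ (j : ℕ) * Complex.exp (2 * π * Complex.I / n) := by
    rw [← pow_succ, pow_eq_pow_mod _ hζ.pow_eq_one, Fin.val_add, Fin.val_one', Nat.add_mod_mod,
      Nat.mod_mod, ← pow_eq_pow_mod _ hζ.pow_eq_one]
  have hs := Real.sin_pi_div_pos hn
  rw [regularPolygon, regularPolygon, hsucc, ← mul_sub, ← mul_sub_one, norm_mul, norm_mul,
    norm_pow, hζ.norm'_eq_one (by omega), one_pow, one_mul, ← pow_one (Complex.exp _),
    Complex.norm_exp_two_pi_I_div_pow_sub_one, Nat.cast_one, mul_one, abs_of_pos hs,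
    Complex.norm_real, norm_inv, Real.norm_of_nonneg (by positivity),
    inv_mul_cancel₀ (by positivity)]

lemma orthonormalBasisOneI_repr_apply (j : Fin n) (i : Fin 2) :
    Complex.orthonormalBasisOneI.repr (regularPolygon n j) i = (2 * sin (π / n))⁻¹ *
      (if i = 0 then cos (2 * π * (j : ℕ) / n) else sin (2 * π * (j : ℕ) / n)) := by
  rw [Complex.orthonormalBasisOneI_repr_apply, regularPolygon, Complex.exp_two_pi_I_div_pow]
  simp only [Complex.re_ofReal_mul, Complex.exp_ofReal_mul_I_re, Complex.im_ofReal_mul,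
    Complex.exp_ofReal_mul_I_im]
  fin_cases i <;> rfl

end regularPolygon

/-- The centered regular `n`-gon is a maximal graph realization of the `n`-cycle:
any centered realization with squared edge lengths at most 1 has total variance
at most `(n/4)·csc²(π/n)`, and the regular `n`-gon attains this bound. -/
theorem stmt_9 (n : ℕ) [NeZero n] (hn : 3 ≤ n) :
    (∀ x : Fin n → EuclideanSpace ℝ (Fin 2),
        (∑ j, x j) = 0 → (∀ j : Fin n, ‖x (j + 1) - x j‖ ^ 2 ≤ 1) →
        ∑ j, ‖x j‖ ^ 2 ≤ ((n : ℝ) / 4) * (1 / Real.sin (π / n)) ^ 2) ∧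
    (∃ x : Fin n → EuclideanSpace ℝ (Fin 2),
        (∀ (j : Fin n) (i : Fin 2), x j i =
          (2 * Real.sin (π / n))⁻¹ *
            (if i = 0 then Real.cos (2 * π * ((j : ℕ) : ℝ) / n)
             else Real.sin (2 * π * ((j : ℕ) : ℝ) / n))) ∧
        (∑ j, x j) = 0 ∧
        (∀ j : Fin n, ‖x (j + 1) - x j‖ ^ 2 ≤ 1) ∧
        ∑ j, ‖x j‖ ^ 2 = ((n : ℝ) / 4) * (1 / Real.sin (π / n)) ^ 2) := by
  have hn2 : 2 ≤ n := by omega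
  have hs := Real.sin_pi_div_pos hn2
  have hbound : (n : ℝ) / 4 * (1 / sin (π / n)) ^ 2 = n / (2 * sin (π / n)) ^ 2 := by ring
  refine ⟨fun x hx hedge => ?_, ?_⟩
  · rw [hbound, le_div_iff₀ (by positivity), mul_comm]
    calc (2 * sin (π / n)) ^ 2 * ∑ j, ‖x j‖ ^ 2 ≤ ∑ j, ‖x (j + 1) - x j‖ ^ 2 :=
          EuclideanSpace.sq_two_mul_sin_mul_sum_norm_sq_le hx
      _ ≤ ∑ _j : Fin n, 1 := sum_le_sum fun j _ => hedge j
      _ = n := by simp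
  · let e := Complex.orthonormalBasisOneI.repr
    refine ⟨fun j => e (regularPolygon n j), regularPolygon.orthonormalBasisOneI_repr_apply, ?_,
      fun j => ?_, ?_⟩
    · rw [← map_sum, regularPolygon.sum_eq_zero hn2, map_zero]
    · rw [← map_sub, e.norm_map, regularPolygon.norm_apply_add_one_sub hn2, one_pow]
    · simp_rw [e.norm_map, regularPolygon.norm_apply hn2, sum_const, card_univ, Fintype.card_fin,
        nsmul_eq_mul, hbound, inv_pow, div_eq_mul_inv]
end

section
/- Weak duality for minimal realizations: for a graph G with incidence vectors b_k, any w ∈ ℝ^m with w ≥ 0 and w^t φ = 1, and any X ∈ ℝ^{n×d} satisfying X^t 1 = 0 and ||X^t b_k||² ≥ φ_k for all edges k, one has ||X||_F² ≥ 1/λ_n(Δ_w), where λ_n(Δ_w) is the largest eigenvalue of the weighted graph Laplacian. -/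
/-!
Summing the Rayleigh-quotient bound `vᵗ Δ_w v ≤ λ ‖v‖²` over the columns `v` of `X` gives
`tr(Xᵗ Δ_w X) ≤ λ ‖X‖_F²`, while `tr(Xᵗ Δ_w X) = Σ_k w_k ‖Xᵗ b_k‖² ≥ Σ_k w_k φ_k = 1`.
-/

open Finset Real

section WeightedLaplacian

variable {ι κ : Type*} [Fintype ι] [Fintype κ]

theorem le_mul_sum_sq_of_homogeneous_of_mem_upperBounds {Q : (ι → ℝ) → ℝ}
    (hQ : ∀ (c : ℝ) v, Q (c • v) = c ^ 2 * Q v) {lam : ℝ}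
    (hlam : lam ∈ upperBounds {r | ∃ v : ι → ℝ, ∑ i, v i ^ 2 = 1 ∧ r = Q v}) (v : ι → ℝ) :
    Q v ≤ lam * ∑ i, v i ^ 2 := by
  rcases eq_or_ne v 0 with rfl | hv
  · have hQ0 : Q 0 = 0 := by simpa using hQ 0 0
    simp [hQ0]
  set s := ∑ i, v i ^ 2
  have hs : 0 < s := by
    obtain ⟨i, hi⟩ := Function.ne_iff.mp hv
    exact sum_pos' (fun j _ => sq_nonneg (v j)) ⟨i, mem_univ i, sq_pos_of_ne_zero hi⟩
  have hunit : ∑ i, ((√s)⁻¹ • v) i ^ 2 = 1 := by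
    simp only [Pi.smul_apply, smul_eq_mul, mul_pow, ← mul_sum, inv_pow, sq_sqrt hs.le]
    exact inv_mul_cancel₀ hs.ne'
  have hle : (√s)⁻¹ ^ 2 * Q v ≤ lam := hQ _ v ▸ hlam ⟨_, hunit, rfl⟩
  rwa [inv_pow, sq_sqrt hs.le, inv_mul_le_iff₀ hs, mul_comm] at hle

/-- The quadratic form `vᵗ Δ_w v` of `Δ_w = Bᵗ diag(w) B`, written edge by edge. -/
def weightedLaplacianForm (w : κ → ℝ) (b : κ → ι → ℝ) (v : ι → ℝ) : ℝ :=
  ∑ k, w k * (∑ i, b k i * v i) ^ 2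

theorem sum_sum_mul_mul_eq_weightedLaplacianForm (w : κ → ℝ) (b : κ → ι → ℝ) (v : ι → ℝ) :
    ∑ i, ∑ j, v i * (∑ k, w k * b k i * b k j) * v j = weightedLaplacianForm w b v := by
  simp_rw [weightedLaplacianForm, sq, sum_mul_sum, mul_sum, sum_mul]
  exact (sum_congr rfl fun i _ => sum_comm).trans <| sum_comm.trans <|
    sum_congr rfl fun k _ => sum_congr rfl fun i _ => sum_congr rfl fun j _ => by ring

theorem weightedLaplacianForm_smul (w : κ → ℝ) (b : κ → ι → ℝ) (c : ℝ) (v : ι → ℝ) :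
    weightedLaplacianForm w b (c • v) = c ^ 2 * weightedLaplacianForm w b v := by
  simp only [weightedLaplacianForm, Pi.smul_apply, smul_eq_mul, mul_left_comm _ c, ← mul_sum]
  rw [mul_sum]
  exact sum_congr rfl fun k _ => by ring

end WeightedLaplacian

theorem stmt_11_general (n m d : ℕ) (b : Fin m → Fin n → ℝ)
    (w φ : Fin m → ℝ) (hw : ∀ k, 0 ≤ w k)
    (hwφ : ∑ k, w k * φ k = 1)
    (X : Fin n → Fin d → ℝ)
    (hXb : ∀ k, φ k ≤ ∑ l, (∑ i, b k i * X i l) ^ 2)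
    (lam : ℝ)
    (hlam : IsGreatest {r : ℝ | ∃ v : Fin n → ℝ, ∑ i, v i ^ 2 = 1 ∧
      r = ∑ i, ∑ j, v i * (∑ k, w k * b k i * b k j) * v j} lam) :
    1 / lam ≤ ∑ i, ∑ l, X i l ^ 2 := by
  have hrayleigh : ∀ v, weightedLaplacianForm w b v ≤ lam * ∑ i, v i ^ 2 :=
    le_mul_sum_sq_of_homogeneous_of_mem_upperBounds (weightedLaplacianForm_smul w b) <| by
      simpa only [sum_sum_mul_mul_eq_weightedLaplacianForm] using hlam.2
  have hdual : 1 ≤ lam * ∑ i, ∑ l, X i l ^ 2 :=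
    calc 1 = ∑ k, w k * φ k := hwφ.symm
      _ ≤ ∑ k, w k * ∑ l, (∑ i, b k i * X i l) ^ 2 :=
        sum_le_sum fun k _ => mul_le_mul_of_nonneg_left (hXb k) (hw k)
      _ = ∑ l, weightedLaplacianForm w b (fun i => X i l) := by
        simp only [weightedLaplacianForm, mul_sum]
        exact sum_comm
      _ ≤ ∑ l, lam * ∑ i, X i l ^ 2 := sum_le_sum fun l _ => hrayleigh _
      _ = lam * ∑ i, ∑ l, X i l ^ 2 := by rw [← mul_sum, sum_comm]
  have hF : 0 ≤ ∑ i, ∑ l, X i l ^ 2 := by positivity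
  have hlam_pos : 0 < lam := pos_of_mul_pos_left (one_pos.trans_le hdual) hF
  rwa [div_le_iff₀ hlam_pos, mul_comm]

/-- Weak duality for minimal realizations: `‖X‖_F² ≥ 1/λ_n(Δ_w)` for any centered
realization with squared edge lengths at least `φ` and feasible weights `w`. -/
theorem stmt_11 (n m d : ℕ) (b : Fin m → Fin n → ℝ)
    (hb : ∀ k, ∃ i j : Fin n, i ≠ j ∧
      ∀ l, b k l = if l = i then 1 else if l = j then -1 else 0)
    (w φ : Fin m → ℝ) (hw : ∀ k, 0 ≤ w k) (hφ : ∀ k, 0 < φ k)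
    (hwφ : ∑ k, w k * φ k = 1)
    (X : Fin n → Fin d → ℝ)
    (hX1 : ∀ l, ∑ i, X i l = 0)
    (hXb : ∀ k, φ k ≤ ∑ l, (∑ i, b k i * X i l) ^ 2)
    (lam : ℝ)
    (hlam : IsGreatest {r : ℝ | ∃ v : Fin n → ℝ, ∑ i, v i ^ 2 = 1 ∧
      r = ∑ i, ∑ j, v i * (∑ k, w k * b k i * b k j) * v j} lam) :
    1 / lam ≤ ∑ i, ∑ l, X i l ^ 2 :=
  stmt_11_general n m d b w φ hw hwφ X hXb lam hlam
end

section
/- The two-point realization x(i) = c ± 1/2 (with +1/2 on V₊ and −1/2 on V₋, c = −(|V₊|−|V₋|)/(2(|V₊|+|V₋|))) is a minimal graph realization of a connected (d₊,d₋)-semi-regular bipartite graph: it minimizes Σ_i x(i)² among all x : V → ℝ with Σ_i x(i) = 0 and |x(i) − x(j)|² ≥ 1 for every edge (i,j), and the minimum value is |V₊||V₋|/(|V₊|+|V₋|). -/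
/-!
Each edge constraint `1 ≤ (x u - x v)²` forces `|x u| + |x v| ≥ 1`. Summing over the edges and
using semi-regularity (`m = |V₊| d₊ = |V₋| d₋`), the mean absolute values `a` on `V₊` and `b` on
`V₋` satisfy `a + b ≥ 1`. By Cauchy–Schwarz, `∑ x² ≥ |V₊| a² + |V₋| b²`, and the minimum of
`p a² + q b²` on `a + b = 1` is `p q / (p + q)`, attained at `a = q/(p+q)`, `b = p/(p+q)`. These
are the values `c + 1/2` and `-(c - 1/2)` of the two-point realization, which is centered
because `p (c + 1/2) + q (c - 1/2) = 0`.
-/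

open Finset

lemma sum_comp_eq_nsmul_sum_of_card_fiber {ι V M : Type*} [Fintype ι] [DecidableEq V]
    [AddCommMonoid M] {d : ℕ} {S : Finset V} {e : ι → V} (he : ∀ k, e k ∈ S)
    (hdeg : ∀ i ∈ S, #{k | e k = i} = d) (y : V → M) :
    ∑ k, y (e k) = d • ∑ i ∈ S, y i := by
  rw [← sum_fiberwise_of_maps_to (fun k _ => he k), smul_sum]
  refine sum_congr rfl fun i hi => ?_
  rw [sum_congr rfl fun k hk => congrArg y (mem_filter.mp hk).2, sum_const, hdeg i hi]

lemma sum_ite_mem_comp {V α M : Type*} [Fintype V] [DecidableEq V] [AddCommMonoid M]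
    (S : Finset V) (f : α → M) (u v : α) :
    ∑ i, f (if i ∈ S then u else v) = #S • f u + #Sᶜ • f v := by
  rw [← sum_add_sum_compl S, sum_congr rfl fun i hi => by rw [if_pos hi],
    sum_congr rfl fun i (hi : i ∈ Sᶜ) => by rw [if_neg (mem_compl.mp hi)], sum_const, sum_const]

lemma mul_div_add_le_mul_sq_add_mul_sq {p q a b : ℝ} (hp : 0 < p) (hq : 0 < q)
    (hab : 1 ≤ a + b) : p * q / (p + q) ≤ p * a ^ 2 + q * b ^ 2 := by
  have hab2 : p * q ≤ p * q * (a + b) ^ 2 :=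
    le_mul_of_one_le_right (mul_pos hp hq).le (one_le_pow₀ hab)
  rw [div_le_iff₀ (by positivity)]
  -- `(p + q) (p a² + q b²) = p q (a + b)² + (p a - q b)²`
  nlinarith [sq_nonneg (p * a - q * b)]

lemma card_mul_sq_mean_le_sum_sq {ι : Type*} (s : Finset ι) (f : ι → ℝ) :
    #s * ((∑ i ∈ s, f i) / #s) ^ 2 ≤ ∑ i ∈ s, f i ^ 2 := by
  obtain rfl | hs := s.eq_empty_or_nonempty
  · simp
  rw [← le_div_iff₀' (by positivity)]
  exact sum_div_card_sq_le_sum_sq_div_card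

lemma pos_of_connected_of_ne {V : Type*} {m : ℕ} {Ed : Fin m → V × V} {i j : V}
    (hconn : (SimpleGraph.fromRel fun i j => ∃ k, Ed k = (i, j)).Connected) (hij : i ≠ j) :
    0 < m := by
  have : Nontrivial V := ⟨i, j, hij⟩
  obtain ⟨_, -, ⟨k, -⟩ | ⟨k, -⟩⟩ := hconn.preconnected.exists_adj_of_nontrivial i
  all_goals exact k.pos

lemma one_le_mean_abs_add_mean_abs {V : Type*} [Fintype V] [DecidableEq V] {m dp dm : ℕ}
    {Vp : Finset V} {Ed : Fin m → V × V} (hm : 0 < m) (hEd : ∀ k, (Ed k).1 ∈ Vp ∧ (Ed k).2 ∉ Vp)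
    (hdegp : ∀ i ∈ Vp, #{k | (Ed k).1 = i} = dp) (hdegm : ∀ i ∉ Vp, #{k | (Ed k).2 = i} = dm)
    (x : V → ℝ) (hx : ∀ k, 1 ≤ (x (Ed k).1 - x (Ed k).2) ^ 2) :
    1 ≤ (∑ i ∈ Vp, |x i|) / #Vp + (∑ i ∈ Vpᶜ, |x i|) / #Vpᶜ := by
  have hfst (y : V → ℝ) : ∑ k, y (Ed k).1 = dp * ∑ i ∈ Vp, y i := by
    rw [sum_comp_eq_nsmul_sum_of_card_fiber (fun k => (hEd k).1) hdegp, nsmul_eq_mul]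
  have hsnd (y : V → ℝ) : ∑ k, y (Ed k).2 = dm * ∑ i ∈ Vpᶜ, y i := by
    rw [sum_comp_eq_nsmul_sum_of_card_fiber (fun k => mem_compl.mpr (hEd k).2)
      (fun i hi => hdegm i (mem_compl.mp hi)), nsmul_eq_mul]
  have hedge : (m : ℝ) ≤ dp * ∑ i ∈ Vp, |x i| + dm * ∑ i ∈ Vpᶜ, |x i| :=
    calc (m : ℝ) = ∑ _k : Fin m, (1 : ℝ) := by simp
      _ ≤ ∑ k, (|x (Ed k).1| + |x (Ed k).2|) := sum_le_sum fun k _ =>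
        ((one_le_sq_iff_one_le_abs _).mp (hx k)).trans (abs_sub _ _)
      _ = _ := by
        rw [sum_add_distrib]
        exact congrArg₂ (· + ·) (hfst fun i => |x i|) (hsnd fun i => |x i|)
  have hm' : (0 : ℝ) < m := Nat.cast_pos.mpr hm
  have hmean {d c : ℝ} (s : ℝ) (h : (m : ℝ) = d * c) : s / c = d * s / m := by
    rw [h, mul_div_mul_left _ _ (left_ne_zero_of_mul (h ▸ hm'.ne'))]
  -- semi-regularity: `m = d₊ |V₊| = d₋ |V₋|`
  have hmp : (m : ℝ) = dp * #Vp := by simpa using hfst 1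
  have hmq : (m : ℝ) = dm * #Vpᶜ := by simpa using hsnd 1
  rw [hmean (∑ i ∈ Vp, |x i|) hmp, hmean (∑ i ∈ Vpᶜ, |x i|) hmq, ← add_div,
    le_div_iff₀ hm', one_mul]
  exact hedge

theorem card_mul_card_div_le_sum_sq {V : Type*} [Fintype V] [DecidableEq V] {m dp dm : ℕ}
    {Vp : Finset V} {Ed : Fin m → V × V} (hm : 0 < m) (hEd : ∀ k, (Ed k).1 ∈ Vp ∧ (Ed k).2 ∉ Vp)
    (hdegp : ∀ i ∈ Vp, #{k | (Ed k).1 = i} = dp) (hdegm : ∀ i ∉ Vp, #{k | (Ed k).2 = i} = dm)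
    (x : V → ℝ) (hx : ∀ k, 1 ≤ (x (Ed k).1 - x (Ed k).2) ^ 2) :
    (#Vp : ℝ) * #Vpᶜ / (#Vp + #Vpᶜ) ≤ ∑ i, x i ^ 2 := by
  have hp : (0 : ℝ) < #Vp := Nat.cast_pos.mpr (card_pos.mpr ⟨_, (hEd ⟨0, hm⟩).1⟩)
  have hq : (0 : ℝ) < #Vpᶜ := Nat.cast_pos.mpr (card_pos.mpr ⟨_, mem_compl.mpr (hEd ⟨0, hm⟩).2⟩)
  calc (#Vp : ℝ) * #Vpᶜ / (#Vp + #Vpᶜ)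
      ≤ #Vp * ((∑ i ∈ Vp, |x i|) / #Vp) ^ 2 + #Vpᶜ * ((∑ i ∈ Vpᶜ, |x i|) / #Vpᶜ) ^ 2 :=
        mul_div_add_le_mul_sq_add_mul_sq hp hq
          (one_le_mean_abs_add_mean_abs hm hEd hdegp hdegm x hx)
    _ ≤ ∑ i ∈ Vp, |x i| ^ 2 + ∑ i ∈ Vpᶜ, |x i| ^ 2 :=
      add_le_add (card_mul_sq_mean_le_sum_sq _ _) (card_mul_sq_mean_le_sum_sq _ _)
    _ = ∑ i, x i ^ 2 := by simp only [sq_abs, sum_add_sum_compl]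

/-- The two-point realization is a minimal graph realization of a connected
`(d₊,d₋)`-semi-regular bipartite graph: it minimizes the total variance among
centered realizations with squared edge lengths at least `1`, and the minimum
value is `|V₊||V₋|/(|V₊|+|V₋|)`. -/
theorem stmt_13 (V : Type*) [Fintype V] [DecidableEq V] (m dp dm : ℕ)
    (Vp : Finset V)
    (Ed : Fin m → V × V)
    (hEd : ∀ k, (Ed k).1 ∈ Vp ∧ (Ed k).2 ∉ Vp)
    (hdegp : ∀ i ∈ Vp, (Finset.univ.filter fun k => (Ed k).1 = i).card = dp)
    (hdegm : ∀ i ∉ Vp, (Finset.univ.filter fun k => (Ed k).2 = i).card = dm)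
    (hconn : (SimpleGraph.fromRel (fun i j => ∃ k, Ed k = (i, j))).Connected) :
    (∀ x : V → ℝ, ∑ i, x i = 0 →
        (∀ k, 1 ≤ (x (Ed k).1 - x (Ed k).2) ^ 2) →
        (Vp.card : ℝ) * (Vpᶜ.card : ℝ) / ((Vp.card : ℝ) + (Vpᶜ.card : ℝ))
          ≤ ∑ i, x i ^ 2) ∧
    (∃ x : V → ℝ,
        (∀ i, x i = if i ∈ Vp then
            -(((Vp.card : ℝ) - (Vpᶜ.card : ℝ)) / (2 * ((Vp.card : ℝ) + (Vpᶜ.card : ℝ)))) + 1 / 2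
          else
            -(((Vp.card : ℝ) - (Vpᶜ.card : ℝ)) / (2 * ((Vp.card : ℝ) + (Vpᶜ.card : ℝ)))) - 1 / 2) ∧
        ∑ i, x i = 0 ∧
        (∀ k, 1 ≤ (x (Ed k).1 - x (Ed k).2) ^ 2) ∧
        ∑ i, x i ^ 2
          = (Vp.card : ℝ) * (Vpᶜ.card : ℝ) / ((Vp.card : ℝ) + (Vpᶜ.card : ℝ))) := by
  have hpq : (0 : ℝ) < #Vp + #Vpᶜ := by
    have := hconn.nonempty
    rw [← Nat.cast_add, card_add_card_compl]
    exact_mod_cast Fintype.card_pos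
  refine ⟨fun x _ hx => ?_, _, fun i => rfl, ?_, fun k => by norm_num [(hEd k).1, (hEd k).2], ?_⟩
  · have hsq : 0 ≤ ∑ i, x i ^ 2 := sum_nonneg fun i _ => sq_nonneg (x i)
    obtain rfl | ⟨i, hi⟩ := Vp.eq_empty_or_nonempty
    · simpa using hsq
    obtain h | ⟨j, hj⟩ := Vpᶜ.eq_empty_or_nonempty
    · simpa [h] using hsq
    have hm := pos_of_connected_of_ne hconn (ne_of_mem_of_not_mem hi (mem_compl.mp hj))
    exact card_mul_card_div_le_sum_sq hm hEd hdegp hdegm x hx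
  · refine (sum_ite_mem_comp Vp id _ _).trans ?_
    rw [nsmul_eq_mul, nsmul_eq_mul, id, id]
    field_simp
    ring
  · rw [sum_ite_mem_comp Vp (· ^ 2), nsmul_eq_mul, nsmul_eq_mul]
    field_simp
    ring
end

section
/- If Y ∈ ℝ^{n×n} is symmetric positive semidefinite with Y·1 = 0, A is symmetric positive semidefinite with A·1 = 0 and second-smallest eigenvalue λ (i.e., v^t A v ≥ λ||v||² for all v ⟂ 1), and ⟨A, Y⟩_F = λ·tr(JY) where J = I − 11^t/n, then every eigenvector of Y with nonzero eigenvalue lies in the λ-eigenspace of A. -/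
open Finset Real Matrix

/-! With `J` the centering matrix, `B = A - λ J` equals `J (A - λ I) J` because `A 1 = 0`, so it is
positive semidefinite by the Rayleigh bound on `1⊥`. The trace hypothesis says `tr (B Y) = 0`, which
for two positive semidefinite matrices forces `B Y = 0`. An eigenvector `v` of `Y` with eigenvalue
`μ ≠ 0` is orthogonal to `1` because `Y 1 = 0`; hence `J v = v` and `0 = B v = A v - λ v`. -/

open scoped MatrixOrder ComplexOrder in
theorem Matrix.PosSemidef.mul_eq_zero_of_trace_mul_eq_zero {𝕜 ι : Type*} [RCLike 𝕜]
    [Fintype ι] {B Y : Matrix ι ι 𝕜} (hB : B.PosSemidef) (hY : Y.PosSemidef)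
    (h : (B * Y).trace = 0) : B * Y = 0 := by
  classical
  obtain ⟨C, rfl⟩ := CStarAlgebra.nonneg_iff_eq_star_mul_self.mp hB.nonneg
  obtain ⟨D, rfl⟩ := CStarAlgebra.nonneg_iff_eq_star_mul_self.mp hY.nonneg
  simp only [star_eq_conjTranspose] at h ⊢
  -- `tr (Cᴴ C Dᴴ D)` is the squared Frobenius norm of `C Dᴴ`.
  have hCD : C * Dᴴ = 0 := by
    rw [← trace_conjTranspose_mul_self_eq_zero_iff, conjTranspose_mul, conjTranspose_conjTranspose,
      ← h, ← trace_mul_cycle]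
    simp only [Matrix.mul_assoc]
  calc Cᴴ * C * (Dᴴ * D) = Cᴴ * (C * Dᴴ) * D := by simp only [Matrix.mul_assoc]
    _ = 0 := by rw [hCD, Matrix.mul_zero, Matrix.zero_mul]

section mulVec_one

variable {R ι : Type*} [CommSemiring R] [Fintype ι] {Y : Matrix ι ι R}

theorem Matrix.sum_mulVec_eq_zero (hY : Y.IsSymm) (hY1 : Y *ᵥ 1 = 0) (v : ι → R) :
    ∑ i, (Y *ᵥ v) i = 0 := by
  calc ∑ i, (Y *ᵥ v) i = 1 ⬝ᵥ (Y *ᵥ v) := by simp [dotProduct]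
    _ = 0 := by rw [dotProduct_mulVec, ← mulVec_transpose, hY.eq, hY1, zero_dotProduct]

theorem Matrix.sum_eq_zero_of_mulVec_eq_smul [NoZeroDivisors R] (hY : Y.IsSymm)
    (hY1 : Y *ᵥ 1 = 0) {v : ι → R} {μ : R} (hμ : μ ≠ 0) (hv : Y *ᵥ v = μ • v) :
    ∑ i, v i = 0 := by
  have h : μ * ∑ i, v i = 0 := by
    rw [Finset.mul_sum, ← sum_mulVec_eq_zero hY hY1 v, hv]
    rfl
  exact (mul_eq_zero.mp h).resolve_left hμ

theorem Matrix.mul_of_const_one_eq_zero (hY1 : Y *ᵥ 1 = 0) : Y * of (fun _ _ => 1) = 0 := by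
  ext i j
  simpa [mulVec, dotProduct, Matrix.mul_apply] using congrFun hY1 i

end mulVec_one

noncomputable def centeringMatrix (ι : Type*) [Fintype ι] [DecidableEq ι] : Matrix ι ι ℝ :=
  1 - (Fintype.card ι : ℝ)⁻¹ • of fun _ _ => 1

section centering

variable {ι : Type*} [Fintype ι] [DecidableEq ι]

theorem centeringMatrix_mulVec (x : ι → ℝ) :
    centeringMatrix ι *ᵥ x = x - ((Fintype.card ι : ℝ)⁻¹ * ∑ i, x i) • 1 := by
  ext i
  simp only [centeringMatrix, sub_mulVec, one_mulVec, smul_mulVec, Pi.sub_apply, Pi.smul_apply,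
    smul_eq_mul]
  simp [mulVec, dotProduct]

theorem isSymm_centeringMatrix : (centeringMatrix ι).IsSymm :=
  isSymm_one.sub ((IsSymm.ext fun _ _ => rfl).smul _)

theorem centeringMatrix_mulVec_one : centeringMatrix ι *ᵥ 1 = 0 := by
  rcases isEmpty_or_nonempty ι with hι | hι
  · exact Subsingleton.elim _ _
  rw [centeringMatrix_mulVec]
  simp

theorem centeringMatrix_mulVec_of_sum_eq_zero {x : ι → ℝ} (hx : ∑ i, x i = 0) :
    centeringMatrix ι *ᵥ x = x := by
  simp [centeringMatrix_mulVec, hx]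

theorem mul_centeringMatrix {A : Matrix ι ι ℝ} (hA1 : A *ᵥ 1 = 0) :
    A * centeringMatrix ι = A := by
  rw [centeringMatrix, Matrix.mul_sub, Matrix.mul_one, Matrix.mul_smul,
    mul_of_const_one_eq_zero hA1, smul_zero, sub_zero]

theorem sub_smul_centeringMatrix_eq {A : Matrix ι ι ℝ} (hA : A.IsSymm) (hA1 : A *ᵥ 1 = 0)
    (lam : ℝ) :
    A - lam • centeringMatrix ι = centeringMatrix ι * (A - lam • 1) * centeringMatrix ι := by
  have hJA : centeringMatrix ι * A = A := by
    simpa only [transpose_mul, hA.eq, isSymm_centeringMatrix.eq] using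
      congrArg transpose (mul_centeringMatrix hA1)
  rw [Matrix.mul_sub, Matrix.sub_mul, hJA, mul_centeringMatrix hA1, Matrix.mul_smul,
    Matrix.mul_one, Matrix.smul_mul, mul_centeringMatrix centeringMatrix_mulVec_one]

theorem posSemidef_sub_smul_centeringMatrix {A : Matrix ι ι ℝ} (hA : A.IsSymm)
    (hA1 : A *ᵥ 1 = 0) {lam : ℝ}
    (hlam : ∀ v : ι → ℝ, ∑ i, v i = 0 → lam * (v ⬝ᵥ v) ≤ v ⬝ᵥ (A *ᵥ v)) :
    (A - lam • centeringMatrix ι).PosSemidef := by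
  refine .of_dotProduct_mulVec_nonneg ?_ fun x => ?_
  · exact isHermitian_iff_isSymm.mpr (hA.sub (isSymm_centeringMatrix.smul lam))
  rw [sub_smul_centeringMatrix_eq hA hA1, star_trivial, ← mulVec_mulVec, ← mulVec_mulVec,
    dotProduct_mulVec, ← mulVec_transpose, isSymm_centeringMatrix.eq]
  have hw := sum_mulVec_eq_zero isSymm_centeringMatrix centeringMatrix_mulVec_one x
  set w := centeringMatrix ι *ᵥ x
  rw [sub_mulVec, smul_mulVec, one_mulVec, dotProduct_sub, dotProduct_smul, smul_eq_mul]
  linarith [hlam w hw]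

end centering

/-- If `Y` is PSD with `Y·1 = 0`, `A` is PSD with `A·1 = 0`, `λ` lower-bounds the
Rayleigh quotient of `A` on `1⊥`, and `⟨A,Y⟩_F = λ·tr(JY)`, then every eigenvector
of `Y` with nonzero eigenvalue is a `λ`-eigenvector of `A`. -/
theorem stmt_14 (n : ℕ) (Y A : Matrix (Fin n) (Fin n) ℝ)
    (hY : Y.PosSemidef) (hY1 : Y *ᵥ (fun _ => (1 : ℝ)) = 0)
    (hA : A.PosSemidef) (hA1 : A *ᵥ (fun _ => (1 : ℝ)) = 0)
    (lam : ℝ)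
    (hlam : ∀ v : Fin n → ℝ, ∑ i, v i = 0 →
      lam * ∑ i, v i ^ 2 ≤ ∑ i, ∑ j, v i * A i j * v j)
    (J : Matrix (Fin n) (Fin n) ℝ)
    (hJ : J = 1 - (n : ℝ)⁻¹ • Matrix.of (fun _ _ => (1 : ℝ)))
    (htr : Matrix.trace (Aᵀ * Y) = lam * Matrix.trace (J * Y)) :
    ∀ (v : Fin n → ℝ) (μ : ℝ), μ ≠ 0 → Y *ᵥ v = μ • v → A *ᵥ v = lam • v := by
  have hAs : A.IsSymm := isHermitian_iff_isSymm.mp hA.isHermitian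
  obtain rfl : J = centeringMatrix (Fin n) := by rw [hJ, centeringMatrix, Fintype.card_fin]
  have hB := posSemidef_sub_smul_centeringMatrix hAs hA1 fun v hv => by
    simpa [dotProduct, mulVec, sq, Finset.mul_sum, mul_assoc] using hlam v hv
  have hBY : (A - lam • centeringMatrix (Fin n)) * Y = 0 := by
    refine hB.mul_eq_zero_of_trace_mul_eq_zero hY ?_
    rw [Matrix.sub_mul, trace_sub, Matrix.smul_mul, trace_smul, smul_eq_mul, ← htr, hAs.eq,
      sub_self]
  intro v μ hμ hv
  have hv1 : ∑ i, v i = 0 :=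
    sum_eq_zero_of_mulVec_eq_smul (isHermitian_iff_isSymm.mp hY.isHermitian) hY1 hμ hv
  have hBv : (A - lam • centeringMatrix (Fin n)) *ᵥ v = 0 := by
    have h : μ • ((A - lam • centeringMatrix (Fin n)) *ᵥ v) = 0 := by
      rw [← mulVec_smul, ← hv, mulVec_mulVec, hBY, zero_mulVec]
    exact (smul_eq_zero.mp h).resolve_left hμ
  rwa [sub_mulVec, smul_mulVec, centeringMatrix_mulVec_of_sum_eq_zero hv1, sub_eq_zero] at hBv
end
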